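/- Suppose r, θ : ℝ → ℝ are twice differentiable with r > 0 and satisfy r'' − r·θ'² = 0 and r·θ'' + 2·r'·θ' = 1/r³. Then I(t) = (1/2)(r(t)²·θ'(t))² − θ(t) is constant. -/

import Mathlib

/-!
The transverse equation says that the angular momentum `L = r² θ'` satisfies
`L' = r (r θ'' + 2 r' θ') = 1 / r²`, so `(L² / 2)' = L L' = θ'` and `L² / 2 − θ` has zero derivative.
-/

theorem HasDerivAt.sq_mul {r ω : ℝ → ℝ} {r' ω' t : ℝ} (hr : HasDerivAt r r' t)
    (hω : HasDerivAt ω ω' t) :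
    HasDerivAt (fun s => r s ^ 2 * ω s) (r t * (r t * ω' + 2 * r' * ω t)) t :=
  ((hr.fun_pow 2).fun_mul hω).congr_deriv (by push_cast; ring)

theorem hasDerivAt_half_sq_angularMomentum {r θ : ℝ → ℝ} {t : ℝ}
    (hr : DifferentiableAt ℝ r t) (hθ' : DifferentiableAt ℝ (deriv θ) t) (hrt : r t ≠ 0)
    (hang : r t * deriv (deriv θ) t + 2 * deriv r t * deriv θ t = 1 / r t ^ 3) :
    HasDerivAt (fun s => (1 / 2) * (r s ^ 2 * deriv θ s) ^ 2) (deriv θ t) t := by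
  have hL := hr.hasDerivAt.sq_mul hθ'.hasDerivAt
  rw [hang] at hL
  refine ((hL.fun_pow 2).const_mul (1 / 2)).congr_deriv ?_
  field_simp
  ring

theorem lrr_invariant_mu_neg3_general
    (r θ : ℝ → ℝ)
    (hr : ContDiff ℝ 2 r) (hθ : ContDiff ℝ 2 θ)
    (hrpos : ∀ t, 0 < r t)
    (hang : ∀ t, r t * deriv (deriv θ) t + 2 * deriv r t * deriv θ t
      = 1 / (r t) ^ 3) :
    ∀ t₁ t₂ : ℝ,
      (1/2) * ((r t₁) ^ 2 * deriv θ t₁) ^ 2 - θ t₁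
        = (1/2) * ((r t₂) ^ 2 * deriv θ t₂) ^ 2 - θ t₂ := by
  have hI : ∀ t, HasDerivAt (fun s => (1/2) * ((r s) ^ 2 * deriv θ s) ^ 2 - θ s) 0 t := by
    intro t
    have hL := hasDerivAt_half_sq_angularMomentum (hr.differentiable two_ne_zero t)
      (hθ.differentiable_deriv_two t) (hrpos t).ne' (hang t)
    exact (hL.fun_sub (hθ.differentiable two_ne_zero t).hasDerivAt).congr_deriv (sub_self _)
  exact is_const_of_deriv_eq_zero (fun t => (hI t).differentiableAt) (fun t => (hI t).deriv)

/-- for planar motion under the transverse force `1/r³`,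
`I(t) = (1/2)(r² θ')² − θ` is constant. -/
theorem lrr_invariant_mu_neg3
    (r θ : ℝ → ℝ)
    (hr : ContDiff ℝ 2 r) (hθ : ContDiff ℝ 2 θ)
    (hrpos : ∀ t, 0 < r t)
    (hrad : ∀ t, deriv (deriv r) t - r t * (deriv θ t) ^ 2 = 0)
    (hang : ∀ t, r t * deriv (deriv θ) t + 2 * deriv r t * deriv θ t
      = 1 / (r t) ^ 3) :
    ∀ t₁ t₂ : ℝ,
      (1/2) * ((r t₁) ^ 2 * deriv θ t₁) ^ 2 - θ t₁
        = (1/2) * ((r t₂) ^ 2 * deriv θ t₂) ^ 2 - θ t₂ :=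
  lrr_invariant_mu_neg3_general r θ hr hθ hrpos hang
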